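/- For the Baskakov-Schurer-Szász-Stancu operators, the second central moment is L^{(α,β)}_{n,p}((t−x)²; x) = [(n² + β²(n+p))/((n+p)(n+β)²)] x² + [(2n² − 2nβ(1+α) − 2αpβ)/((n+p)(n+β)²)] x + [(2n² + 2nα(n+p) + α²(n+p)²)/((n+β)²(n+p)²)]. -/

import Mathlib

open MeasureTheory Set Filter

/-- Szász-type basis function `s^k_{n,p}(t) = e^{-(n+p)t} ((n+p)t)^k / k!`. -/
noncomputable def bssS (n p k : ℕ) (t : ℝ) : ℝ :=
  Real.exp (-((n : ℝ) + p) * t) * (((n : ℝ) + p) * t) ^ k / (Nat.factorial k)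

/-- Baskakov-type basis function `b^k_{n,p}(x) = C(n+p+k-1,k) x^k / (1+x)^{n+p+k}`. -/
noncomputable def bssB (n p k : ℕ) (x : ℝ) : ℝ :=
  (Nat.choose (n + p + k - 1) k : ℝ) * x ^ k / (1 + x) ^ (n + p + k)

/-- Baskakov-Schurer-Szász operator. -/
noncomputable def Lop (n p : ℕ) (f : ℝ → ℝ) (x : ℝ) : ℝ :=
  ((n : ℝ) + p) * ∑' k : ℕ, bssB n p k x * ∫ t in Ioi (0 : ℝ), f t * bssS n p k t

/-- Baskakov-Schurer-Szász-Stancu operator. -/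
noncomputable def LSop (α β : ℝ) (n p : ℕ) (f : ℝ → ℝ) (x : ℝ) : ℝ :=
  Lop n p (fun t => f (((n : ℝ) * t + α) / ((n : ℝ) + β))) x

/-!
Expanding `((n t + α) / (n + β) - x) ^ 2` as a quadratic in `t` reduces the theorem to the moments
of order at most two of both kernels. For the Szász kernel,
`∫ tʲ s^k_{n,p}(t) dt = (k + j)! / (k! (n + p)^(j + 1))` is a Gamma integral. For the Baskakov
weights, `∑ₖ b^k_{n,p}(x) = 1` is the negative binomial series in `x / (1 + x)`, and the index shift
`(k + 1) b^{k+1}_{n,p} = (n + p) x b^k_{n,p+1}` lowers the order of a moment by one at the cost of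
replacing `p` by `p + 1`.
-/

open Real
open scoped Nat

lemma integrableOn_pow_mul_exp_neg_mul (j : ℕ) {c : ℝ} (hc : 0 < c) :
    IntegrableOn (fun t : ℝ => t ^ j * exp (-(c * t))) (Ioi 0) := by
  simpa only [Real.rpow_one, Real.rpow_natCast, neg_mul] using
    integrableOn_rpow_mul_exp_neg_mul_rpow (s := j) (p := 1)
      (neg_one_lt_zero.trans_le j.cast_nonneg) one_pos hc

lemma integral_pow_mul_exp_neg_mul (j : ℕ) {c : ℝ} (hc : 0 < c) :
    ∫ t in Ioi (0 : ℝ), t ^ j * exp (-(c * t)) = j ! / c ^ (j + 1) := by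
  have h := integral_rpow_mul_exp_neg_mul_Ioi (a := (j + 1 : ℕ)) (by positivity) hc
  rw [Nat.cast_succ, add_sub_cancel_right, Real.Gamma_nat_eq_factorial] at h
  simp only [Real.rpow_natCast, ← Nat.cast_succ] at h
  rw [h, one_div_pow, one_div_mul_eq_div]

lemma pow_mul_bssS (n p k j : ℕ) (t : ℝ) :
    t ^ j * bssS n p k t =
      ((n + p : ℝ) ^ k / k !) * (t ^ (k + j) * exp (-((n + p : ℝ) * t))) := by
  rw [bssS, neg_mul, mul_pow, pow_add]
  ring

lemma integrableOn_pow_mul_bssS {n p : ℕ} (hnp : 0 < n + p) (k j : ℕ) :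
    IntegrableOn (fun t => t ^ j * bssS n p k t) (Ioi 0) := by
  simp only [pow_mul_bssS]
  exact (integrableOn_pow_mul_exp_neg_mul _ (by exact_mod_cast hnp)).const_mul _

lemma integral_pow_mul_bssS {n p : ℕ} (hnp : 0 < n + p) (k j : ℕ) :
    ∫ t in Ioi (0 : ℝ), t ^ j * bssS n p k t = (k + j)! / (k ! * (n + p : ℝ) ^ (j + 1)) := by
  have hc : (0 : ℝ) < n + p := by exact_mod_cast hnp
  simp only [pow_mul_bssS]
  rw [integral_const_mul, integral_pow_mul_exp_neg_mul _ hc]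
  field_simp
  ring

lemma mul_integral_quadratic_mul_bssS {n p : ℕ} (hnp : 0 < n + p) (k : ℕ) (a b e : ℝ) :
    (n + p : ℝ) * ∫ t in Ioi (0 : ℝ), (a * t ^ 2 + b * t + e) * bssS n p k t =
      a * (k + 1) * (k + 2) / (n + p : ℝ) ^ 2 + b * (k + 1) / (n + p : ℝ) + e := by
  have hc : (0 : ℝ) < n + p := by exact_mod_cast hnp
  have hI := integrableOn_pow_mul_bssS hnp k
  have hsplit : (fun t => (a * t ^ 2 + b * t + e) * bssS n p k t) = fun t =>
      a * (t ^ 2 * bssS n p k t) + b * (t ^ 1 * bssS n p k t) + e * (t ^ 0 * bssS n p k t) := by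
    funext t
    ring
  rw [hsplit, integral_add (f := fun t => a * (t ^ 2 * bssS n p k t) + b * (t ^ 1 * bssS n p k t))
      (((hI 2).const_mul a).add ((hI 1).const_mul b)) ((hI 0).const_mul e),
    integral_add ((hI 2).const_mul a) ((hI 1).const_mul b), integral_const_mul, integral_const_mul,
    integral_const_mul, integral_pow_mul_bssS hnp, integral_pow_mul_bssS hnp,
    integral_pow_mul_bssS hnp, Nat.factorial_succ (k + 1), Nat.factorial_succ k]
  push_cast [add_zero]
  field_simp
  ring

lemma hasSum_bssB {n p : ℕ} (hnp : 0 < n + p) {x : ℝ} (hx : 0 ≤ x) :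
    HasSum (fun k => bssB n p k x) 1 := by
  obtain ⟨m, hm⟩ : ∃ m, n + p = m + 1 := ⟨n + p - 1, by omega⟩
  have hx1 : 0 < 1 + x := by linarith
  have hr : ‖x / (1 + x)‖ < 1 := by
    rw [Real.norm_of_nonneg (by positivity), div_lt_one hx1]
    linarith
  have h := (hasSum_choose_mul_geometric_of_norm_lt_one m hr).mul_left ((1 + x) ^ (m + 1))⁻¹
  rw [one_sub_div hx1.ne', add_sub_cancel_right, div_pow, one_pow, one_div_one_div,
    inv_mul_cancel₀ (by positivity)] at h
  refine h.congr_fun fun k => ?_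
  rw [bssB, hm, show m + 1 + k - 1 = k + m by omega, Nat.choose_symm_add, div_pow, pow_add]
  field_simp

lemma succ_mul_bssB_succ (n p k : ℕ) (x : ℝ) :
    ((k : ℝ) + 1) * bssB n p (k + 1) x = (n + p : ℝ) * x * bssB n (p + 1) k x := by
  have hchoose : (((n + p + k).choose (k + 1) : ℕ) : ℝ) * (k + 1) =
      ((n + p + k).choose k : ℕ) * (n + p : ℝ) := by
    exact_mod_cast congrArg (Nat.cast (R := ℝ)) ((Nat.choose_succ_right_eq _ _).trans
      (by rw [Nat.add_sub_cancel]))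
  rw [bssB, bssB, show n + p + (k + 1) - 1 = n + p + k by omega,
    show n + (p + 1) + k - 1 = n + p + k by omega, show n + (p + 1) + k = n + p + (k + 1) by omega]
  linear_combination (x ^ (k + 1) / (1 + x) ^ (n + p + (k + 1))) * hchoose

lemma hasSum_natCast_mul_bssB (n p : ℕ) {x : ℝ} (hx : 0 ≤ x) :
    HasSum (fun k : ℕ => (k : ℝ) * bssB n p k x) ((n + p : ℝ) * x) := by
  have h := (hasSum_bssB (n := n) (p := p + 1) (by omega) hx).mul_left ((n + p : ℝ) * x)
  rw [mul_one] at h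
  simpa only [Nat.cast_zero, zero_mul, zero_add] using
    HasSum.zero_add (f := fun k : ℕ => (k : ℝ) * bssB n p k x)
      (h.congr_fun fun k => by rw [Nat.cast_succ, succ_mul_bssB_succ])

lemma hasSum_sq_mul_bssB (n p : ℕ) {x : ℝ} (hx : 0 ≤ x) :
    HasSum (fun k : ℕ => (k : ℝ) ^ 2 * bssB n p k x)
      ((n + p : ℝ) * x * ((n + p + 1) * x + 1)) := by
  have h := ((hasSum_natCast_mul_bssB n (p + 1) hx).add
    (hasSum_bssB (n := n) (p := p + 1) (by omega) hx)).mul_left ((n + p : ℝ) * x)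
  rw [Nat.cast_succ, ← add_assoc] at h
  have h' : HasSum (fun k : ℕ => ((k + 1 : ℕ) : ℝ) ^ 2 * bssB n p (k + 1) x)
      ((n + p : ℝ) * x * ((n + p + 1) * x + 1)) := by
    refine h.congr_fun fun k => ?_
    rw [Nat.cast_succ, sq, mul_assoc, succ_mul_bssB_succ]
    ring
  simpa using HasSum.zero_add (f := fun k : ℕ => (k : ℝ) ^ 2 * bssB n p k x) h'

lemma Lop_quadratic {n p : ℕ} (hnp : 0 < n + p) {x : ℝ} (hx : 0 ≤ x) (a b e : ℝ) :
    Lop n p (fun t => a * t ^ 2 + b * t + e) x =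
      a * (((n + p + 1) * x ^ 2 + 4 * x) / (n + p : ℝ) + 2 / (n + p : ℝ) ^ 2) +
        b * (x + 1 / (n + p : ℝ)) + e := by
  have hc : (n + p : ℝ) ≠ 0 := by exact_mod_cast hnp.ne'
  rw [Lop, ← tsum_mul_left]
  simp_rw [mul_left_comm (n + p : ℝ), mul_integral_quadratic_mul_bssS hnp]
  set c : ℝ := n + p
  have hsum : HasSum (fun k : ℕ => bssB n p k x *
      (a * (k + 1) * (k + 2) / c ^ 2 + b * (k + 1) / c + e))
      (a / c ^ 2 * (c * x * ((c + 1) * x + 1)) + (3 * a / c ^ 2 + b / c) * (c * x)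
        + (2 * a / c ^ 2 + b / c + e) * 1) := by
    refine (((hasSum_sq_mul_bssB n p hx).mul_left (a / c ^ 2)).add
      ((hasSum_natCast_mul_bssB n p hx).mul_left (3 * a / c ^ 2 + b / c))).add
      ((hasSum_bssB hnp hx).mul_left (2 * a / c ^ 2 + b / c + e)) |>.congr_fun fun k => ?_
    ring
  rw [hsum.tsum_eq]
  field_simp
  ring

theorem stmt_11_general (n p : ℕ) (hn : 1 ≤ n) (α β : ℝ)
    (hα : 0 ≤ α) (hαβ : α ≤ β) (x : ℝ) (hx : 0 ≤ x) :
    LSop α β n p (fun t => (t - x) ^ 2) x =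
      (((n : ℝ) ^ 2 + β ^ 2 * ((n : ℝ) + p)) / (((n : ℝ) + p) * ((n : ℝ) + β) ^ 2)) * x ^ 2 +
      ((2 * (n : ℝ) ^ 2 - 2 * (n : ℝ) * β * (1 + α) - 2 * α * p * β) /
        (((n : ℝ) + p) * ((n : ℝ) + β) ^ 2)) * x +
      (2 * (n : ℝ) ^ 2 + 2 * (n : ℝ) * α * ((n : ℝ) + p) + α ^ 2 * ((n : ℝ) + p) ^ 2) /
        (((n : ℝ) + β) ^ 2 * ((n : ℝ) + p) ^ 2) := by
  have hn' : (1 : ℝ) ≤ n := by exact_mod_cast hn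
  have hnp : (n : ℝ) + p ≠ 0 := by positivity
  have hnβ : (n : ℝ) + β ≠ 0 := by linarith
  have hexpand : (fun t : ℝ => ((n * t + α) / (n + β) - x) ^ 2) =
      fun t => (n / (n + β)) ^ 2 * t ^ 2 + 2 * (n / (n + β)) * (α / (n + β) - x) * t +
        (α / (n + β) - x) ^ 2 := by
    funext t
    ring
  rw [LSop, hexpand, Lop_quadratic (by omega) hx]
  field_simp
  ring

theorem stmt_11 (n p : ℕ) (hn : 1 ≤ n) (hp : 1 ≤ p) (α β : ℝ)
    (hα : 0 ≤ α) (hαβ : α ≤ β) (x : ℝ) (hx : 0 ≤ x) :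
    LSop α β n p (fun t => (t - x) ^ 2) x =
      (((n : ℝ) ^ 2 + β ^ 2 * ((n : ℝ) + p)) / (((n : ℝ) + p) * ((n : ℝ) + β) ^ 2)) * x ^ 2 +
      ((2 * (n : ℝ) ^ 2 - 2 * (n : ℝ) * β * (1 + α) - 2 * α * p * β) /
        (((n : ℝ) + p) * ((n : ℝ) + β) ^ 2)) * x +
      (2 * (n : ℝ) ^ 2 + 2 * (n : ℝ) * α * ((n : ℝ) + p) + α ^ 2 * ((n : ℝ) + p) ^ 2) /
        (((n : ℝ) + β) ^ 2 * ((n : ℝ) + p) ^ 2) :=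
  stmt_11_general n p hn α β hα hαβ x hx
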